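/- arXiv:2101.01299 — 2 statements merged into one kernel-verified Lean document; each statement's English description precedes it below -/
import Mathlib

section
/- Let Z : Ω₀ → ℝ^{m1×m2} be a random matrix on a probability space whose entries are square-integrable with E[Z_{ab}] = 0 and E[Z_{ab} Z_{cd}] = σ² if (a,b) = (c,d) and 0 otherwise, for some σ² > 0. Let U ∈ ℝ^{m1×R} and V ∈ ℝ^{m2×R} have orthonormal columns and X := UUᵀ Z VVᵀ. Then for every entry index (i,j), the variance of X_{ij} satisfies E[X_{ij}²] = σ² μ_i(U) μ_j(V), the product of the coherences of the row and column subspaces with respect to the i-th and j-th standard basis vectors. -/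
/-!
Expanding the entry, `X_ij = ∑_{a,b} P_ia Q_bj Z_ab` with `P = UUᵀ`, `Q = VVᵀ`. Since the
entries of `Z` are orthogonal in `L²` with common squared norm `σ²`, the second moment of this linear
combination is `σ² ∑_{a,b} P_ia² Q_bj²`, and the double sum factors as `‖P e_i‖² ‖Q e_j‖²`.
-/

open Matrix MeasureTheory

/-- The coherence `μ_i(U) := ‖P_U e_i‖₂²` of the column span of `U` with respect to
the `i`-th standard basis vector, where `P_U = U Uᵀ`. -/
def coherence {m r : ℕ} (U : Matrix (Fin m) (Fin r) ℝ) (i : Fin m) : ℝ :=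
  ∑ k, ((U * Uᵀ).mulVec (Pi.single i 1) k) ^ 2

section SecondMoment

variable {Ω ι : Type*} [MeasurableSpace Ω] {μ : Measure Ω} [Fintype ι]

theorem integral_sq_sum_mul_eq_sum_sum {f : ι → Ω → ℝ} (hf : ∀ p, MemLp (f p) 2 μ)
    (c : ι → ℝ) :
    ∫ ω, (∑ p, c p * f p ω) ^ 2 ∂μ = ∑ p, ∑ q, c p * c q * ∫ ω, f p ω * f q ω ∂μ := by
  have hint : ∀ p q, Integrable (fun ω => f p ω * f q ω) μ :=
    fun p q => (hf p).integrable_mul (hf q)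
  have hexpand : ∀ ω, (∑ p, c p * f p ω) ^ 2 = ∑ p, ∑ q, c p * c q * (f p ω * f q ω) :=
    fun ω => by
      rw [sq, Fintype.sum_mul_sum]
      exact Finset.sum_congr rfl fun p _ => Finset.sum_congr rfl fun q _ => mul_mul_mul_comm ..
  simp_rw [hexpand]
  rw [integral_finsetSum _ fun p _ => integrable_finsetSum _ fun q _ => (hint p q).const_mul _]
  refine Finset.sum_congr rfl fun p _ => ?_
  rw [integral_finsetSum _ fun q _ => (hint p q).const_mul _]
  exact Finset.sum_congr rfl fun q _ => integral_const_mul _ _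

theorem integral_sq_sum_mul_of_orthogonal [DecidableEq ι] {f : ι → Ω → ℝ}
    (hf : ∀ p, MemLp (f p) 2 μ) {σ2 : ℝ} (horth : ∀ p q, ∫ ω, f p ω * f q ω ∂μ = if p = q then σ2 else 0) (c : ι → ℝ) :
    ∫ ω, (∑ p, c p * f p ω) ^ 2 ∂μ = σ2 * ∑ p, c p ^ 2 := by
  rw [integral_sq_sum_mul_eq_sum_sum hf, Finset.mul_sum]
  simp [horth, sq, mul_comm]

end SecondMoment

theorem Matrix.mul_mul_apply_eq_sum {l m n o α : Type*} [Fintype m] [Fintype n] [CommSemiring α]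
    (A : Matrix l m α) (B : Matrix m n α) (C : Matrix n o α) (i : l) (j : o) :
    (A * B * C) i j = ∑ p : m × n, A i p.1 * C p.2 j * B p.1 p.2 := by
  simp only [mul_apply, Finset.sum_mul, Fintype.sum_prod_type]
  rw [Finset.sum_comm]
  exact Finset.sum_congr rfl fun _ _ => Finset.sum_congr rfl fun _ _ => by ring

theorem coherence_eq_sum_sq {m r : ℕ} (U : Matrix (Fin m) (Fin r) ℝ) (i : Fin m) :
    coherence U i = ∑ k, (U * Uᵀ) k i ^ 2 := by
  simp [coherence]

theorem smg_variance_coherence_general {m1 m2 R : ℕ} {Ω₀ : Type*} [MeasureSpace Ω₀]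
    (Z : Ω₀ → Matrix (Fin m1) (Fin m2) ℝ) (σ2 : ℝ)
    (hL2 : ∀ a b, MemLp (fun ω => Z ω a b) 2 volume)
    (hcov : ∀ a b c d,
      (∫ ω, Z ω a b * Z ω c d) = if (a, b) = (c, d) then σ2 else 0)
    (U : Matrix (Fin m1) (Fin R) ℝ) (V : Matrix (Fin m2) (Fin R) ℝ) :
    let X : Ω₀ → Matrix (Fin m1) (Fin m2) ℝ := fun ω => (U * Uᵀ) * Z ω * (V * Vᵀ)
    ∀ (i : Fin m1) (j : Fin m2),
      (∫ ω, (X ω i j) ^ 2) = σ2 * coherence U i * coherence V j := by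
  intro X i j
  have hX : ∀ ω, X ω i j
      = ∑ p : Fin m1 × Fin m2, (U * Uᵀ) i p.1 * (V * Vᵀ) p.2 j * Z ω p.1 p.2 :=
    fun ω => mul_mul_apply_eq_sum _ (Z ω) _ i j
  have hP : ∀ a, (U * Uᵀ) i a = (U * Uᵀ) a i := fun a => by
    simp only [mul_apply, transpose_apply, mul_comm]
  simp_rw [hX]
  refine (integral_sq_sum_mul_of_orthogonal (f := fun (p : Fin m1 × Fin m2) ω => Z ω p.1 p.2)
      (fun p => hL2 p.1 p.2) (fun p q => hcov _ _ _ _) _).trans ?_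
  rw [coherence_eq_sum_sq U, coherence_eq_sum_sq V, mul_assoc, Fintype.sum_mul_sum,
    Fintype.sum_prod_type]
  simp_rw [mul_pow, hP]

/-- Under the SMG model `X = U Uᵀ Z V Vᵀ` with mean-zero, uncorrelated,
variance-`σ²` entries of `Z`, the variance of each entry satisfies
`E[X_{ij}²] = σ² μ_i(U) μ_j(V)`. -/
theorem smg_variance_coherence {m1 m2 R : ℕ} {Ω₀ : Type*} [MeasureSpace Ω₀]
    [IsProbabilityMeasure (volume : Measure Ω₀)]
    (Z : Ω₀ → Matrix (Fin m1) (Fin m2) ℝ) (σ2 : ℝ) (hσ : 0 < σ2)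
    (hL2 : ∀ a b, MemLp (fun ω => Z ω a b) 2 volume)
    (hmean : ∀ a b, (∫ ω, Z ω a b) = 0)
    (hcov : ∀ a b c d,
      (∫ ω, Z ω a b * Z ω c d) = if (a, b) = (c, d) then σ2 else 0)
    (U : Matrix (Fin m1) (Fin R) ℝ) (V : Matrix (Fin m2) (Fin R) ℝ)
    (hU : Uᵀ * U = 1) (hV : Vᵀ * V = 1) :
    let X : Ω₀ → Matrix (Fin m1) (Fin m2) ℝ := fun ω => (U * Uᵀ) * Z ω * (V * Vᵀ)
    ∀ (i : Fin m1) (j : Fin m2),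
      (∫ ω, (X ω i j) ^ 2) = σ2 * coherence U i * coherence V j :=
  smg_variance_coherence_general Z σ2 hL2 hcov U V
end

section
/- Let U ∈ ℝ^{m1×R} and V ∈ ℝ^{m2×R} have orthonormal columns, P_U = UUᵀ, P_V = VVᵀ, M := P_V ⊗ P_U, fix σ² > 0 and γ² > 0, and set η² := σ²γ². For a list Ω of distinct pairs in [m1]×[m2] and pair indices (i,j), (k,l), define Var_Ω(k,l) := σ² ( μ_k(U) μ_l(V) − ν_{kl}ᵀ (M_Ω + γ² I)^{-1} ν_{kl} ) and Cov_Ω((i,j),(k,l)) := σ² ( ν_{i,k}(U) ν_{j,l}(V) − ν_{ij}ᵀ (M_Ω + γ² I)^{-1} ν_{kl} ), where ν_{ij} := ( ν_{i,i_n}(U) ν_{j,j_n}(V) )_n over the pairs (i_n,j_n) in Ω. Then for any pair (i,j) ∉ Ω and any pair (k,l) ∈ [m1]×[m2], the denominator Var_Ω(i,j) + η² is strictly positive and Var_{Ω,(i,j)}(k,l) = Var_Ω(k,l) − Cov_Ω((i,j),(k,l))² / ( Var_Ω(i,j) + η² ), where Ω,(i,j) denotes the list Ω extended by the pair (i,j).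 -/
open Matrix Kronecker

/-- The cross-coherence `ν_{i,i'}(U) := e_{i'}ᵀ P_U e_i`, where `P_U = U Uᵀ`. -/
def crossCoherence {m r : ℕ} (U : Matrix (Fin m) (Fin r) ℝ) (i i' : Fin m) : ℝ :=
  dotProduct (Pi.single i' 1) ((U * Uᵀ).mulVec (Pi.single i 1))

/-- The cross-coherence vector `ν_{kl} = (ν_{k,i_n}(U) ν_{l,j_n}(V))_n` over the
observed index list `t`. -/
def nuVec {m1 m2 r N : ℕ} (U : Matrix (Fin m1) (Fin r) ℝ)
    (V : Matrix (Fin m2) (Fin r) ℝ) (t : Fin N → Fin m1 × Fin m2)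
    (k : Fin m1) (l : Fin m2) : Fin N → ℝ :=
  fun n => crossCoherence U k (t n).1 * crossCoherence V l (t n).2

/-- The inverse regularized principal submatrix `(M_Ω + γ² I)⁻¹` of
`M = P_V ⊗ P_U` on the observed index list `t`. -/
noncomputable def postMat {m1 m2 r N : ℕ} (U : Matrix (Fin m1) (Fin r) ℝ)
    (V : Matrix (Fin m2) (Fin r) ℝ) (γ2 : ℝ)
    (t : Fin N → Fin m1 × Fin m2) : Matrix (Fin N) (Fin N) ℝ :=
  (((V * Vᵀ) ⊗ₖ (U * Uᵀ)).submatrix (fun n => ((t n).2, (t n).1))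
      (fun n => ((t n).2, (t n).1)) + γ2 • (1 : Matrix (Fin N) (Fin N) ℝ))⁻¹

/-- Posterior variance `Var(X_{kl} | Y_Ω) = σ²(μ_k(U)μ_l(V) − ν_{kl}ᵀ(M_Ω+γ²I)⁻¹ν_{kl})`
under the SMG model. -/
noncomputable def varPost {m1 m2 r N : ℕ} (U : Matrix (Fin m1) (Fin r) ℝ)
    (V : Matrix (Fin m2) (Fin r) ℝ) (σ2 γ2 : ℝ)
    (t : Fin N → Fin m1 × Fin m2) (k : Fin m1) (l : Fin m2) : ℝ :=
  σ2 * (coherence U k * coherence V l -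
    dotProduct (nuVec U V t k l) ((postMat U V γ2 t).mulVec (nuVec U V t k l)))

/-- Posterior covariance
`Cov(X_{ij}, X_{kl} | Y_Ω) = σ²(ν_{i,k}(U)ν_{j,l}(V) − ν_{ij}ᵀ(M_Ω+γ²I)⁻¹ν_{kl})`
under the SMG model. -/
noncomputable def covPost {m1 m2 r N : ℕ} (U : Matrix (Fin m1) (Fin r) ℝ)
    (V : Matrix (Fin m2) (Fin r) ℝ) (σ2 γ2 : ℝ)
    (t : Fin N → Fin m1 × Fin m2) (i k : Fin m1) (j l : Fin m2) : ℝ :=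
  σ2 * (crossCoherence U i k * crossCoherence V j l -
    dotProduct (nuVec U V t i j) ((postMat U V γ2 t).mulVec (nuVec U V t k l)))

/-! ### Auxiliary lemmas -/

lemma dot_snoc {N : ℕ} (x y : Fin N → ℝ) (a c : ℝ) :
    (Fin.snoc x a : Fin (N+1) → ℝ) ⬝ᵥ (Fin.snoc y c : Fin (N+1) → ℝ) = x ⬝ᵥ y + a * c := by
  simp [dotProduct, Fin.sum_univ_castSucc]

lemma smul_one_posDef {N : ℕ} {γ2 : ℝ} (hγ : 0 < γ2) :
    (γ2 • (1 : Matrix (Fin N) (Fin N) ℝ)).PosDef := by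
  refine Matrix.PosDef.of_dotProduct_mulVec_pos ?_ ?_
  · simp [Matrix.IsHermitian, Matrix.conjTranspose_eq_transpose_of_trivial]
  · intro x hx
    have h : (γ2 • (1 : Matrix (Fin N) (Fin N) ℝ)) *ᵥ x = γ2 • x := by
      simp [Matrix.smul_mulVec]
    rw [h]
    have hxx : 0 < x ⬝ᵥ x := by
      have := Matrix.dotProduct_star_self_pos_iff (v := x)
      simpa using this.mpr hx
    simpa [dotProduct_smul, smul_eq_mul] using mul_pos hγ hxx

lemma crossCoherence_eq {m r : ℕ} (U : Matrix (Fin m) (Fin r) ℝ) (i i' : Fin m) :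
    crossCoherence U i i' = (U * Uᵀ) i' i := by
  simp [crossCoherence, Matrix.mulVec_single, single_dotProduct]

lemma proj_symm {m r : ℕ} (U : Matrix (Fin m) (Fin r) ℝ) (i i' : Fin m) :
    (U * Uᵀ) i i' = (U * Uᵀ) i' i := by
  conv_lhs => rw [show (U * Uᵀ) = (U * Uᵀ)ᵀ by
    rw [Matrix.transpose_mul, Matrix.transpose_transpose]]
  rfl

lemma coherence_eq {m r : ℕ} (U : Matrix (Fin m) (Fin r) ℝ) (hU : Uᵀ * U = 1) (i : Fin m) :
    coherence U i = (U * Uᵀ) i i := by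
  have hidem : (U * Uᵀ) * (U * Uᵀ) = U * Uᵀ := by
    rw [Matrix.mul_assoc, ← Matrix.mul_assoc Uᵀ, hU, Matrix.one_mul]
  have h : coherence U i = ((U * Uᵀ)ᵀ * (U * Uᵀ)) i i := by
    simp only [coherence, Matrix.mul_apply, Matrix.mulVec_single_one, Matrix.col_apply,
      Matrix.transpose_apply, sq, mul_one]
  rw [h, Matrix.transpose_mul, Matrix.transpose_transpose, hidem]

lemma kron_posSemidef {m1 m2 r : ℕ} (U : Matrix (Fin m1) (Fin r) ℝ)
    (V : Matrix (Fin m2) (Fin r) ℝ) : (((V * Vᵀ) ⊗ₖ (U * Uᵀ))).PosSemidef := by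
  have h : ((V * Vᵀ) ⊗ₖ (U * Uᵀ)) = (V ⊗ₖ U) * (V ⊗ₖ U)ᴴ := by
    rw [Matrix.mul_kronecker_mul]
    congr 1
  rw [h]
  exact Matrix.posSemidef_self_mul_conjTranspose _

lemma div_alg (σ2 ss μ Q d qq : ℝ) (hσ : σ2 ≠ 0) (hss : ss ≠ 0) :
    σ2 * (μ - (Q + (d - qq)^2/ss)) = σ2 * (μ - Q) - (σ2 * (d - qq))^2 / (σ2 * ss) := by
  field_simp
  ring

/-- Schur-complement identity for the quadratic form of the inverse of a
positive-definite matrix extended by one row/column. -/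
lemma schur_key {N : ℕ} (A : Matrix (Fin N) (Fin N) ℝ)
    (At : Matrix (Fin (N+1)) (Fin (N+1)) ℝ)
    (hA : A.PosDef) (hAt : Aᵀ = A) (hAtd : At.PosDef)
    (b : Fin N → ℝ) (c : ℝ)
    (h1 : ∀ p q : Fin N, At p.castSucc q.castSucc = A p q)
    (h2 : ∀ p : Fin N, At p.castSucc (Fin.last N) = b p)
    (h3 : ∀ q : Fin N, At (Fin.last N) q.castSucc = b q)
    (h4 : At (Fin.last N) (Fin.last N) = c) :
    0 < c - b ⬝ᵥ A⁻¹ *ᵥ b ∧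
    ∀ (ν : Fin N → ℝ) (d : ℝ),
      (Fin.snoc ν d : Fin (N+1) → ℝ) ⬝ᵥ At⁻¹ *ᵥ (Fin.snoc ν d : Fin (N+1) → ℝ) =
        ν ⬝ᵥ A⁻¹ *ᵥ ν + (d - b ⬝ᵥ A⁻¹ *ᵥ ν)^2 / (c - b ⬝ᵥ A⁻¹ *ᵥ b) := by
  have hdetA : IsUnit A.det := (Matrix.isUnit_iff_isUnit_det A).mp hA.isUnit
  have hdetAt : IsUnit At.det := (Matrix.isUnit_iff_isUnit_det At).mp hAtd.isUnit
  have hAAinv : A * A⁻¹ = 1 := Matrix.mul_nonsing_inv A hdetA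
  have hAinvsym : A⁻¹ᵀ = A⁻¹ := by
    rw [Matrix.transpose_nonsing_inv, hAt]
  set w : Fin N → ℝ := A⁻¹ *ᵥ b with hw
  have hAw : A *ᵥ w = b := by
    rw [hw, Matrix.mulVec_mulVec, hAAinv, Matrix.one_mulVec]
  have hsymdot : ∀ v : Fin N → ℝ, w ⬝ᵥ v = b ⬝ᵥ A⁻¹ *ᵥ v := by
    intro v
    rw [hw, dotProduct_comm, Matrix.dotProduct_mulVec, ← Matrix.mulVec_transpose, hAinvsym,
      dotProduct_comm]
  have hmul : ∀ (y : Fin N → ℝ) (d : ℝ),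
      At *ᵥ (Fin.snoc y d : Fin (N+1) → ℝ) =
        Fin.snoc (A *ᵥ y + d • b) (b ⬝ᵥ y + c * d) := by
    intro y d
    funext p
    induction p using Fin.lastCases with
    | last =>
      simp only [Matrix.mulVec, dotProduct, Fin.sum_univ_castSucc, Fin.snoc_castSucc,
        Fin.snoc_last, h3, h4]
    | cast p =>
      simp only [Matrix.mulVec, dotProduct, Fin.sum_univ_castSucc, Fin.snoc_castSucc,
        Fin.snoc_last, h1, h2, Pi.add_apply, Pi.smul_apply, smul_eq_mul]
      ring
  set s : ℝ := c - b ⬝ᵥ A⁻¹ *ᵥ b with hs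
  have hspos : 0 < s := by
    have hx : (Fin.snoc (-w) 1 : Fin (N+1) → ℝ) ≠ 0 := by
      intro h
      have := congrFun h (Fin.last N)
      simp at this
    have hpos := hAtd.dotProduct_mulVec_pos hx
    rw [star_trivial, hmul (-w) 1] at hpos
    have h0 : (A *ᵥ (-w) + (1:ℝ) • b) = 0 := by
      simp [Matrix.mulVec_neg, hAw]
    rw [h0, dot_snoc] at hpos
    simpa [hs, dotProduct_comm b w, ← hsymdot b, mul_comm] using hpos
  refine ⟨hspos, fun ν d => ?_⟩
  set q : ℝ := b ⬝ᵥ A⁻¹ *ᵥ ν with hq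
  set e : ℝ := (d - q) / s with he
  set u : Fin (N+1) → ℝ := Fin.snoc (A⁻¹ *ᵥ ν - e • w) e with hu
  have harg1 : A *ᵥ (A⁻¹ *ᵥ ν - e • w) + e • b = ν := by
    rw [Matrix.mulVec_sub, Matrix.mulVec_smul, Matrix.mulVec_mulVec, hAAinv,
      Matrix.one_mulVec, hAw]
    abel
  have harg2 : b ⬝ᵥ (A⁻¹ *ᵥ ν - e • w) + c * e = d := by
    rw [dotProduct_sub, dotProduct_smul, smul_eq_mul, ← hq]
    have hbw : b ⬝ᵥ w = c - s := by rw [hs, hw]; ring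
    rw [hbw, he]
    field_simp
    ring
  have hAtu : At *ᵥ u = Fin.snoc ν d := by
    rw [hu, hmul, harg1, harg2]
  have hinv : At⁻¹ *ᵥ (Fin.snoc ν d : Fin (N+1) → ℝ) = u := by
    rw [← hAtu, Matrix.mulVec_mulVec, Matrix.nonsing_inv_mul At hdetAt, Matrix.one_mulVec]
  rw [hinv, hu, dot_snoc, dotProduct_sub, dotProduct_smul, smul_eq_mul]
  have hνw : ν ⬝ᵥ w = q := by rw [dotProduct_comm, hsymdot]
  rw [hνw, he]
  field_simp
  ring

/-- Proposition 2, variance reduction, conditional on subspaces: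
for `(i,j)` not among the observed indices, `Var_Ω(i,j) + η² > 0` and
`Var_{Ω∪(i,j)}(k,l) = Var_Ω(k,l) − Cov_Ω((i,j),(k,l))² / (Var_Ω(i,j) + η²)`,
where `η² = σ²γ²`. -/
theorem variance_reduction {m1 m2 R N : ℕ}
    (U : Matrix (Fin m1) (Fin R) ℝ) (V : Matrix (Fin m2) (Fin R) ℝ)
    (hU : Uᵀ * U = 1) (hV : Vᵀ * V = 1)
    (σ2 γ2 : ℝ) (hσ : 0 < σ2) (hγ : 0 < γ2)
    (t : Fin N → Fin m1 × Fin m2) (ht : Function.Injective t)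
    (i : Fin m1) (j : Fin m2) (hij : (i, j) ∉ Set.range t)
    (k : Fin m1) (l : Fin m2) :
    0 < varPost U V σ2 γ2 t i j + σ2 * γ2 ∧
    varPost U V σ2 γ2 (Fin.snoc t (i, j)) k l
      = varPost U V σ2 γ2 t k l -
        (covPost U V σ2 γ2 t i k j l) ^ 2 / (varPost U V σ2 γ2 t i j + σ2 * γ2) := by
  classical
  set P : Matrix (Fin m2 × Fin m1) (Fin m2 × Fin m1) ℝ := (V * Vᵀ) ⊗ₖ (U * Uᵀ) with hP
  set tt : Fin (N+1) → Fin m1 × Fin m2 := Fin.snoc t (i, j) with htt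
  set A : Matrix (Fin N) (Fin N) ℝ :=
    P.submatrix (fun n => ((t n).2, (t n).1)) (fun n => ((t n).2, (t n).1)) +
      γ2 • (1 : Matrix (Fin N) (Fin N) ℝ) with hAdef
  set At : Matrix (Fin (N+1)) (Fin (N+1)) ℝ :=
    P.submatrix (fun n => ((tt n).2, (tt n).1)) (fun n => ((tt n).2, (tt n).1)) +
      γ2 • (1 : Matrix (Fin (N+1)) (Fin (N+1)) ℝ) with hAtdef
  have hApd : A.PosDef :=
    Matrix.PosDef.posSemidef_add ((kron_posSemidef U V).submatrix _) (smul_one_posDef hγ)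
  have hAtpd : At.PosDef :=
    Matrix.PosDef.posSemidef_add ((kron_posSemidef U V).submatrix _) (smul_one_posDef hγ)
  have hAsym : Aᵀ = A := by
    rw [← Matrix.conjTranspose_eq_transpose_of_trivial]
    exact hApd.1
  set b : Fin N → ℝ := nuVec U V t i j with hb
  set c : ℝ := crossCoherence U i i * crossCoherence V j j + γ2 with hc
  have h1 : ∀ p q : Fin N, At p.castSucc q.castSucc = A p q := by
    intro p q
    simp [hAtdef, hAdef, htt, Matrix.add_apply, Matrix.smul_apply, Matrix.submatrix_apply,
      Fin.snoc_castSucc, Matrix.one_apply, Fin.castSucc_inj]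
  have h2 : ∀ p : Fin N, At p.castSucc (Fin.last N) = b p := by
    intro p
    simp only [hAtdef, htt, hb, Matrix.add_apply, Matrix.smul_apply, Matrix.submatrix_apply,
      Fin.snoc_castSucc, Fin.snoc_last, Matrix.one_apply, nuVec, crossCoherence_eq, hP,
      Matrix.kroneckerMap_apply, smul_eq_mul]
    rw [if_neg (Fin.castSucc_lt_last p).ne]
    ring
  have h3 : ∀ q : Fin N, At (Fin.last N) q.castSucc = b q := by
    intro q
    simp only [hAtdef, htt, hb, Matrix.add_apply, Matrix.smul_apply, Matrix.submatrix_apply,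
      Fin.snoc_castSucc, Fin.snoc_last, Matrix.one_apply, nuVec, crossCoherence_eq, hP,
      Matrix.kroneckerMap_apply, smul_eq_mul]
    rw [if_neg (Fin.castSucc_lt_last q).ne', proj_symm V, proj_symm U]
    ring
  have h4 : At (Fin.last N) (Fin.last N) = c := by
    simp only [hAtdef, htt, hc, Matrix.add_apply, Matrix.smul_apply, Matrix.submatrix_apply,
      Fin.snoc_last, Matrix.one_apply, crossCoherence_eq, hP,
      Matrix.kroneckerMap_apply, smul_eq_mul, if_true]
    ring
  obtain ⟨hspos, hform⟩ := schur_key A At hApd hAsym hAtpd b c h1 h2 h3 h4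
  have hpost : postMat U V γ2 t = A⁻¹ := rfl
  have hpostt : postMat U V γ2 tt = At⁻¹ := rfl
  set ν : Fin N → ℝ := nuVec U V t k l with hν
  set d : ℝ := crossCoherence U k i * crossCoherence V l j with hd
  have hnusnoc : nuVec U V tt k l = Fin.snoc ν d := by
    funext n
    induction n using Fin.lastCases with
    | last => simp [nuVec, htt, hν, hd, Fin.snoc_last]
    | cast p => simp [nuVec, htt, hν, Fin.snoc_castSucc]
  have hvarij : varPost U V σ2 γ2 t i j + σ2 * γ2 = σ2 * (c - b ⬝ᵥ A⁻¹ *ᵥ b) := by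
    rw [varPost, hpost, coherence_eq U hU, coherence_eq V hV, ← crossCoherence_eq,
      ← crossCoherence_eq, hc, ← hb]
    ring
  constructor
  · rw [hvarij]; exact mul_pos hσ hspos
  · have hcov : covPost U V σ2 γ2 t i k j l = σ2 * (d - b ⬝ᵥ A⁻¹ *ᵥ ν) := by
      rw [covPost, hpost, hd, hb, hν]
      rw [crossCoherence_eq U i k, crossCoherence_eq V j l, crossCoherence_eq U k i,
        crossCoherence_eq V l j, proj_symm U k i, proj_symm V l j]
    have hvarkl : varPost U V σ2 γ2 t k l =
        σ2 * (coherence U k * coherence V l - ν ⬝ᵥ A⁻¹ *ᵥ ν) := by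
      rw [varPost, hpost, hν]
    have hvarsnoc : varPost U V σ2 γ2 tt k l =
        σ2 * (coherence U k * coherence V l -
          (ν ⬝ᵥ A⁻¹ *ᵥ ν + (d - b ⬝ᵥ A⁻¹ *ᵥ ν)^2 / (c - b ⬝ᵥ A⁻¹ *ᵥ b))) := by
      rw [varPost, hpostt, hnusnoc, hform]
    rw [hvarsnoc, hvarkl, hcov, hvarij]
    exact div_alg σ2 (c - b ⬝ᵥ A⁻¹ *ᵥ b) (coherence U k * coherence V l)
      (ν ⬝ᵥ A⁻¹ *ᵥ ν) d (b ⬝ᵥ A⁻¹ *ᵥ ν) hσ.ne' hspos.ne'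
end
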